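/- Define Ẽ_{n,ℓ} = ∑_{p=1}^{2ℓ−n} d(2ℓ−p−1, ℓ−p) · ∑_{i=0}^{2ℓ−n−p} (−1)^{i+p+1} (2ℓ−p−i)^{ℓ−p−1} / (i!·(2ℓ−n−p−i)!). Then for all n ≥ 2, ∑_{m=ℓ}^{n} S(n,m)·Ẽ_{m,ℓ} = ∑_{k=0}^{ℓ−1} (−1)^{k+ℓ−1} d(k+ℓ−1, k) S(n−1+k, k+ℓ). -/

import Mathlib

/-- `dStir n k` : the number of fixed-point-free permutations of an `n`-element set with
exactly `k` cycles (the unsigned associated Stirling number of the first kind). -/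
noncomputable def dStir (n k : ℕ) : ℕ :=
  Nat.card {σ : Equiv.Perm (Fin n) // (∀ i, σ i ≠ i) ∧ Multiset.card σ.cycleType = k}

/-- `stirling2 n m` : the Stirling number of the second kind, the number of partitions of an
`n`-element set into `m` nonempty blocks. -/
noncomputable def stirling2 (n m : ℕ) : ℕ :=
  Nat.card {P : Finpartition (Finset.univ : Finset (Fin n)) // P.parts.card = m}

/-- The explicit candidate formula `Ẽ` for the number of simple series-parallel matroids. -/
noncomputable def Etilde (n ℓ : ℕ) : ℚ :=
  ∑ p ∈ Finset.Icc 1 (2 * ℓ - n), (dStir (2 * ℓ - p - 1) (ℓ - p) : ℚ) *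
    ∑ i ∈ Finset.range (2 * ℓ - n - p + 1),
      (-1 : ℚ) ^ (i + p + 1) * ((2 * ℓ - p - i : ℕ) : ℚ) ^ ((ℓ : ℤ) - p - 1) /
        (i.factorial * (2 * ℓ - n - p - i).factorial)

open Finset

section Aux

set_option linter.unusedSectionVars false

variable {α : Type*} [Fintype α] [DecidableEq α]

def pSet (α : Type*) [Fintype α] [DecidableEq α] (m : ℕ) : Finset (Finset (Finset α)) :=
  univ.filter fun F => (∀ s ∈ F, ∀ t ∈ F, s ≠ t → Disjoint s t) ∧ F.sup id = univ ∧ ∅ ∉ F ∧ F.card = m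

lemma mem_pSet {m : ℕ} {F : Finset (Finset α)} :
    F ∈ pSet α m ↔ (∀ s ∈ F, ∀ t ∈ F, s ≠ t → Disjoint s t) ∧ F.sup id = univ ∧ ∅ ∉ F ∧
      F.card = m := by
  simp [pSet]

/-- the part containing `none`. -/
def nonePart (F : Finset (Finset (Option α))) : Finset (Option α) :=
  F.sup fun t => if none ∈ t then t else ∅

lemma nonePart_eq {M : ℕ} {F : Finset (Finset (Option α))} (hF : F ∈ pSet (Option α) M)
    {t : Finset (Option α)} (ht : t ∈ F) (hnt : none ∈ t) : nonePart F = t := by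
  obtain ⟨hdisj, -, -, -⟩ := mem_pSet.1 hF
  refine le_antisymm (Finset.sup_le fun u hu => ?_) ?_
  · by_cases h : none ∈ u
    · have : u = t := by
        by_contra hne
        exact Finset.disjoint_left.1 (hdisj u hu t ht hne) h hnt
      subst this; simp [h]
    · simp [h]
  · have : t ≤ (fun u => if none ∈ u then u else ∅) t := by simp [hnt]
    exact this.trans (Finset.le_sup (f := fun u => if none ∈ u then u else ∅) ht)

lemma exists_nonePart {M : ℕ} {F : Finset (Finset (Option α))} (hF : F ∈ pSet (Option α) M) :
    nonePart F ∈ F ∧ none ∈ nonePart F := by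
  obtain ⟨-, hsup, -, -⟩ := mem_pSet.1 hF
  have : (none : Option α) ∈ F.sup id := by rw [hsup]; exact mem_univ _
  obtain ⟨t, ht, hnt⟩ := Finset.mem_sup.1 this
  rw [nonePart_eq hF ht hnt]; exact ⟨ht, hnt⟩

lemma eraseNone_injOn {M : ℕ} {F : Finset (Finset (Option α))} (hF : F ∈ pSet (Option α) M) :
    ∀ s ∈ F, ∀ t ∈ F, s.eraseNone = t.eraseNone → s = t := by
  obtain ⟨hdisj, -, hne, -⟩ := mem_pSet.1 hF
  intro s hs t ht h
  by_contra hst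
  have hd := hdisj s hs t ht hst
  have hsub : s ⊆ {none} := by
    intro x hx
    match x with
    | none => simp
    | some a =>
      have : a ∈ Finset.eraseNone t := h ▸ Finset.mem_eraseNone.2 hx
      exact absurd (Finset.mem_eraseNone.1 this) (Finset.disjoint_left.1 hd hx)
  have hsub' : t ⊆ {none} := by
    intro x hx
    match x with
    | none => simp
    | some a =>
      have : a ∈ Finset.eraseNone s := h ▸ Finset.mem_eraseNone.2 hx
      exact absurd hx (Finset.disjoint_left.1 hd (Finset.mem_eraseNone.1 this))
  have hs1 : s = {none} := by
    rcases Finset.eq_empty_or_nonempty s with rfl | ⟨x, hx⟩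
    · exact absurd hs hne
    · have hxn : x = none := by simpa using hsub hx
      exact Finset.Subset.antisymm hsub (Finset.singleton_subset_iff.2 (hxn ▸ hx))
  have ht1 : t = {none} := by
    rcases Finset.eq_empty_or_nonempty t with rfl | ⟨x, hx⟩
    · exact absurd ht hne
    · have hxn : x = none := by simpa using hsub' hx
      exact Finset.Subset.antisymm hsub' (Finset.singleton_subset_iff.2 (hxn ▸ hx))
  exact hst (hs1.trans ht1.symm)

lemma none_not_mem_erase {M : ℕ} {F : Finset (Finset (Option α))} (hF : F ∈ pSet (Option α) M)
    {u : Finset (Option α)} (hu : u ∈ F) (hnu : none ∈ u) :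
    ∀ t ∈ F.erase u, none ∉ t := by
  obtain ⟨hdisj, -, -, -⟩ := mem_pSet.1 hF
  intro t ht hnt
  obtain ⟨hne, htF⟩ := Finset.mem_erase.1 ht
  exact Finset.disjoint_left.1 (hdisj t htF u hu hne) hnt hnu

lemma eraseNone_eq_empty {t : Finset (Option α)} (h : Finset.eraseNone t = ∅) (hn : none ∉ t) :
    t = ∅ := by
  ext x
  match x with
  | none => simp [hn]
  | some a =>
    simp only [Finset.notMem_empty, iff_false]
    intro hx
    exact Finset.notMem_empty a (h ▸ Finset.mem_eraseNone.2 hx)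

lemma restrictA_mem {m : ℕ} {F : Finset (Finset (Option α))} (hF : F ∈ pSet (Option α) (m+1))
    (hsing : {none} ∈ F) : (F.erase {none}).image Finset.eraseNone ∈ pSet α m := by
  obtain ⟨hdisj, hsup, hne, hcard⟩ := mem_pSet.1 hF
  have hnone := none_not_mem_erase hF hsing (by simp)
  refine mem_pSet.2 ⟨?_, ?_, ?_, ?_⟩
  · rintro s' hs' t' ht' hne'
    obtain ⟨s, hs, rfl⟩ := Finset.mem_image.1 hs'
    obtain ⟨t, ht, rfl⟩ := Finset.mem_image.1 ht'
    have hst : s ≠ t := fun h => hne' (by rw [h])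
    refine Finset.disjoint_left.2 fun a ha ha' => ?_
    exact Finset.disjoint_left.1
      (hdisj s (Finset.mem_of_mem_erase hs) t (Finset.mem_of_mem_erase ht) hst)
      (Finset.mem_eraseNone.1 ha) (Finset.mem_eraseNone.1 ha')
  · ext a
    simp only [Finset.mem_sup, mem_univ, iff_true, Finset.mem_image, id]
    have : (some a : Option α) ∈ F.sup id := by rw [hsup]; exact mem_univ _
    obtain ⟨t, ht, hat⟩ := Finset.mem_sup.1 this
    have htne : t ≠ {none} := fun h => by simp [h] at hat
    exact ⟨Finset.eraseNone t, ⟨t, Finset.mem_erase.2 ⟨htne, ht⟩, rfl⟩,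
      Finset.mem_eraseNone.2 hat⟩
  · intro h
    obtain ⟨t, ht, h0⟩ := Finset.mem_image.1 h
    exact hne ((eraseNone_eq_empty h0 (hnone t ht)) ▸ Finset.mem_of_mem_erase ht)
  · have hinj : Set.InjOn Finset.eraseNone (F.erase {none}) := fun s hs t ht h =>
      eraseNone_injOn hF s (Finset.mem_of_mem_erase (Finset.mem_coe.1 hs)) t
        (Finset.mem_of_mem_erase (Finset.mem_coe.1 ht)) h
    rw [Finset.card_image_of_injOn hinj, Finset.card_erase_of_mem hsing, hcard]
    omega

lemma liftA_mem {m : ℕ} {G : Finset (Finset α)} (hG : G ∈ pSet α m) :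
    insert {none} (G.image fun t => t.image some) ∈ pSet (Option α) (m+1) ∧
      {none} ∈ insert {none} (G.image fun t => t.image some) := by
  obtain ⟨hdisj, hsup, hne, hcard⟩ := mem_pSet.1 hG
  have hsing : ({none} : Finset (Option α)) ∉ G.image fun t => t.image some := by
    intro h
    obtain ⟨t, ht, h0⟩ := Finset.mem_image.1 h
    have : (none : Option α) ∈ t.image some := by rw [h0]; simp
    simp at this
  refine ⟨mem_pSet.2 ⟨?_, ?_, ?_, ?_⟩, Finset.mem_insert_self _ _⟩
  · rintro s' hs' t' ht' hne'
    rcases Finset.mem_insert.1 hs' with rfl | hs'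
    · rcases Finset.mem_insert.1 ht' with rfl | ht'
      · exact absurd rfl hne'
      · obtain ⟨t, ht, rfl⟩ := Finset.mem_image.1 ht'
        refine Finset.disjoint_left.2 fun a ha ha' => ?_
        rw [Finset.mem_singleton] at ha
        subst ha
        simp at ha'
    · obtain ⟨s, hs, rfl⟩ := Finset.mem_image.1 hs'
      rcases Finset.mem_insert.1 ht' with rfl | ht'
      · refine Finset.disjoint_left.2 fun a ha ha' => ?_
        rw [Finset.mem_singleton] at ha'
        subst ha'
        simp at ha
      · obtain ⟨t, ht, rfl⟩ := Finset.mem_image.1 ht'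
        have hst : s ≠ t := fun h => hne' (by rw [h])
        refine Finset.disjoint_left.2 fun a ha ha' => ?_
        obtain ⟨b, hb, rfl⟩ := Finset.mem_image.1 ha
        have : b ∈ t := by simpa using ha'
        exact Finset.disjoint_left.1 (hdisj s hs t ht hst) hb this
  · ext x
    simp only [Finset.mem_sup, mem_univ, iff_true, id]
    match x with
    | none => exact ⟨{none}, Finset.mem_insert_self _ _, by simp⟩
    | some a =>
      have : a ∈ G.sup id := by rw [hsup]; exact mem_univ _
      obtain ⟨t, ht, hat⟩ := Finset.mem_sup.1 this
      exact ⟨t.image some, Finset.mem_insert_of_mem (Finset.mem_image_of_mem _ ht),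
        Finset.mem_image_of_mem _ hat⟩
  · intro h
    rcases Finset.mem_insert.1 h with h | h
    · exact absurd h.symm (Finset.singleton_ne_empty _)
    · obtain ⟨t, ht, h0⟩ := Finset.mem_image.1 h
      exact hne ((Finset.image_eq_empty.1 h0) ▸ ht)
  · rw [Finset.card_insert_of_notMem hsing, Finset.card_image_of_injective _
      (Finset.image_injective (Option.some_injective α)), hcard]

lemma cardA (m : ℕ) :
    ((pSet (Option α) (m+1)).filter fun F => {none} ∈ F).card = (pSet α m).card := by
  refine Finset.card_bij' (fun F _ => (F.erase {none}).image Finset.eraseNone)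
    (fun G _ => insert {none} (G.image fun t => t.image some)) ?_ ?_ ?_ ?_
  · intro F hF'
    obtain ⟨hF, hsing⟩ := Finset.mem_filter.1 hF'
    exact restrictA_mem hF hsing
  · intro G hG
    exact Finset.mem_filter.2 ⟨(liftA_mem hG).1, (liftA_mem hG).2⟩
  · intro F hF'
    obtain ⟨hF, hsing⟩ := Finset.mem_filter.1 hF'
    have hnone := none_not_mem_erase hF hsing (by simp)
    rw [Finset.image_image]
    have : ∀ t ∈ F.erase {none}, (Function.comp (fun t => Finset.image some t)
        Finset.eraseNone) t = t := by
      intro t ht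
      simp only [Function.comp_apply, Finset.image_some_eraseNone]
      exact Finset.erase_eq_of_notMem (hnone t ht)
    rw [Finset.image_congr fun t ht => this t ht, Finset.image_id',
      Finset.insert_erase hsing]
  · intro G hG
    have hsing : ({none} : Finset (Option α)) ∉ G.image fun t => t.image some := by
      intro h
      obtain ⟨t, ht, h0⟩ := Finset.mem_image.1 h
      have : (none : Option α) ∈ t.image some := by rw [h0]; simp
      simp at this
    rw [Finset.erase_insert hsing, Finset.image_image]
    have : ∀ t ∈ G, (Function.comp Finset.eraseNone (fun t => Finset.image some t)) t = t := by
      intro t ht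
      simp [Function.comp_apply, Finset.eraseNone_image_some]
    rw [Finset.image_congr fun t ht => this t ht, Finset.image_id']

lemma insert_none_image_eraseNone {t : Finset (Option α)} (h : none ∈ t) :
    insert none ((Finset.eraseNone t).image some) = t := by
  ext x
  match x with
  | none => simp [h]
  | some a => simp

lemma eraseNone_insert_none_image (t : Finset α) :
    Finset.eraseNone (insert none (t.image some)) = t := by
  ext a
  simp

lemma restrictB_mem {m : ℕ} {F : Finset (Finset (Option α))} (hF : F ∈ pSet (Option α) (m+1))
    (hsing : {none} ∉ F) : F.image Finset.eraseNone ∈ pSet α (m+1) := by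
  obtain ⟨hdisj, hsup, hne, hcard⟩ := mem_pSet.1 hF
  refine mem_pSet.2 ⟨?_, ?_, ?_, ?_⟩
  · rintro s' hs' t' ht' hne'
    obtain ⟨s, hs, rfl⟩ := Finset.mem_image.1 hs'
    obtain ⟨t, ht, rfl⟩ := Finset.mem_image.1 ht'
    have hst : s ≠ t := fun h => hne' (by rw [h])
    refine Finset.disjoint_left.2 fun a ha ha' => ?_
    exact Finset.disjoint_left.1 (hdisj s hs t ht hst)
      (Finset.mem_eraseNone.1 ha) (Finset.mem_eraseNone.1 ha')
  · ext a
    simp only [Finset.mem_sup, mem_univ, iff_true, Finset.mem_image, id]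
    have : (some a : Option α) ∈ F.sup id := by rw [hsup]; exact mem_univ _
    obtain ⟨t, ht, hat⟩ := Finset.mem_sup.1 this
    exact ⟨Finset.eraseNone t, ⟨t, ht, rfl⟩, Finset.mem_eraseNone.2 hat⟩
  · intro h
    obtain ⟨t, ht, h0⟩ := Finset.mem_image.1 h
    by_cases hn : none ∈ t
    · have : t = {none} := by
        ext x
        match x with
        | none => simp [hn]
        | some a =>
          simp only [Finset.mem_singleton]
          constructor
          · intro hx
            exact absurd (h0 ▸ Finset.mem_eraseNone.2 hx) (Finset.notMem_empty a)
          · intro hx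
            exact absurd hx (Option.some_ne_none a)
      exact hsing (this ▸ ht)
    · exact hne ((eraseNone_eq_empty h0 hn) ▸ ht)
  · rw [Finset.card_image_of_injOn (fun s hs t ht h =>
      eraseNone_injOn hF s (Finset.mem_coe.1 hs) t (Finset.mem_coe.1 ht) h), hcard]

lemma liftB_mem {m : ℕ} {G : Finset (Finset α)} (hG : G ∈ pSet α (m+1)) {t : Finset α}
    (ht : t ∈ G) :
    insert (insert none (t.image some)) ((G.erase t).image fun u => u.image some)
        ∈ pSet (Option α) (m+1) ∧
      {none} ∉ insert (insert none (t.image some)) ((G.erase t).image fun u => u.image some) ∧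
      (insert none (t.image some))
        ∈ insert (insert none (t.image some)) ((G.erase t).image fun u => u.image some) := by
  obtain ⟨hdisj, hsup, hne, hcard⟩ := mem_pSet.1 hG
  have htne : t.Nonempty := by
    rcases Finset.eq_empty_or_nonempty t with rfl | h
    · exact absurd ht hne
    · exact h
  have hhead : insert none (t.image some) ∉ (G.erase t).image fun u => u.image some := by
    intro h
    obtain ⟨u, hu, h0⟩ := Finset.mem_image.1 h
    have : (none : Option α) ∈ u.image some := by rw [h0]; simp
    simp at this
  refine ⟨mem_pSet.2 ⟨?_, ?_, ?_, ?_⟩, ?_, Finset.mem_insert_self _ _⟩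
  · rintro s' hs' t' ht' hne'
    rcases Finset.mem_insert.1 hs' with rfl | hs'
    · rcases Finset.mem_insert.1 ht' with rfl | ht'
      · exact absurd rfl hne'
      · obtain ⟨u, hu, rfl⟩ := Finset.mem_image.1 ht'
        refine Finset.disjoint_left.2 fun x hx hx' => ?_
        obtain ⟨b, hb, rfl⟩ := Finset.mem_image.1 hx'
        have hbt : b ∈ t := by simpa using Finset.mem_insert.1 hx
        exact Finset.disjoint_left.1
          (hdisj u (Finset.mem_of_mem_erase hu) t ht (Finset.mem_erase.1 hu).1) hb hbt
    · obtain ⟨u, hu, rfl⟩ := Finset.mem_image.1 hs'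
      rcases Finset.mem_insert.1 ht' with rfl | ht'
      · refine Finset.disjoint_left.2 fun x hx hx' => ?_
        obtain ⟨b, hb, rfl⟩ := Finset.mem_image.1 hx
        have hbt : b ∈ t := by simpa using Finset.mem_insert.1 hx'
        exact Finset.disjoint_left.1
          (hdisj u (Finset.mem_of_mem_erase hu) t ht (Finset.mem_erase.1 hu).1) hb hbt
      · obtain ⟨v, hv, rfl⟩ := Finset.mem_image.1 ht'
        have huv : u ≠ v := fun h => hne' (by rw [h])
        refine Finset.disjoint_left.2 fun x hx hx' => ?_
        obtain ⟨b, hb, rfl⟩ := Finset.mem_image.1 hx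
        have : b ∈ v := by simpa using hx'
        exact Finset.disjoint_left.1
          (hdisj u (Finset.mem_of_mem_erase hu) v (Finset.mem_of_mem_erase hv) huv) hb this
  · ext x
    simp only [Finset.mem_sup, mem_univ, iff_true, id]
    match x with
    | none => exact ⟨_, Finset.mem_insert_self _ _, Finset.mem_insert_self _ _⟩
    | some a =>
      have : a ∈ G.sup id := by rw [hsup]; exact mem_univ _
      obtain ⟨u, hu, hau⟩ := Finset.mem_sup.1 this
      by_cases h : u = t
      · subst h
        exact ⟨_, Finset.mem_insert_self _ _,
          Finset.mem_insert_of_mem (Finset.mem_image_of_mem _ hau)⟩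
      · exact ⟨u.image some,
          Finset.mem_insert_of_mem (Finset.mem_image_of_mem _ (Finset.mem_erase.2 ⟨h, hu⟩)),
          Finset.mem_image_of_mem _ hau⟩
  · intro h
    rcases Finset.mem_insert.1 h with h | h
    · exact (Finset.insert_nonempty _ _).ne_empty h.symm
    · obtain ⟨u, hu, h0⟩ := Finset.mem_image.1 h
      exact hne ((Finset.image_eq_empty.1 h0) ▸ Finset.mem_of_mem_erase hu)
  · rw [Finset.card_insert_of_notMem hhead, Finset.card_image_of_injective _
      (Finset.image_injective (Option.some_injective α)), Finset.card_erase_of_mem ht, hcard]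
    omega
  · intro h
    rcases Finset.mem_insert.1 h with h | h
    · obtain ⟨a, ha⟩ := htne
      have : (some a : Option α) ∈ ({none} : Finset (Option α)) := by
        rw [h]
        exact Finset.mem_insert_of_mem (Finset.mem_image_of_mem _ ha)
      simp at this
    · obtain ⟨u, hu, h0⟩ := Finset.mem_image.1 h
      have : (none : Option α) ∈ u.image some := by rw [h0]; simp
      simp at this

lemma cardB (m : ℕ) :
    ((pSet (Option α) (m+1)).filter fun F => {none} ∉ F).card
      = ((pSet α (m+1)).sigma fun G => G).card := by
  refine Finset.card_bij'
    (fun F _ => ⟨F.image Finset.eraseNone, Finset.eraseNone (nonePart F)⟩)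
    (fun p _ => insert (insert none (p.2.image some)) ((p.1.erase p.2).image fun u =>
      u.image some)) ?_ ?_ ?_ ?_
  · intro F hF'
    obtain ⟨hF, hsing⟩ := Finset.mem_filter.1 hF'
    exact Finset.mem_sigma.2 ⟨restrictB_mem hF hsing,
      Finset.mem_image_of_mem _ (exists_nonePart hF).1⟩
  · intro p hp
    obtain ⟨hG, ht⟩ := Finset.mem_sigma.1 hp
    exact Finset.mem_filter.2 ⟨(liftB_mem hG ht).1, (liftB_mem hG ht).2.1⟩
  · intro F hF'
    obtain ⟨hF, hsing⟩ := Finset.mem_filter.1 hF'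
    obtain ⟨ht₀, hn₀⟩ := exists_nonePart hF
    dsimp only
    rw [insert_none_image_eraseNone hn₀]
    have h2 : (F.image Finset.eraseNone).erase (Finset.eraseNone (nonePart F))
        = (F.erase (nonePart F)).image Finset.eraseNone := by
      ext u
      simp only [Finset.mem_erase, Finset.mem_image]
      constructor
      · rintro ⟨hne', s, hs, rfl⟩
        exact ⟨s, ⟨fun h => hne' (by rw [h]), hs⟩, rfl⟩
      · rintro ⟨s, ⟨hne', hsF⟩, rfl⟩
        exact ⟨fun h => hne' (eraseNone_injOn hF s hsF _ ht₀ h), s, hsF, rfl⟩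
    rw [h2, Finset.image_image]
    have h3 : ∀ s ∈ F.erase (nonePart F), (Function.comp (fun u => Finset.image some u)
        Finset.eraseNone) s = s := by
      intro s hs
      simp only [Function.comp_apply, Finset.image_some_eraseNone]
      exact Finset.erase_eq_of_notMem (none_not_mem_erase hF ht₀ hn₀ s hs)
    rw [Finset.image_congr fun s hs => h3 s hs, Finset.image_id', Finset.insert_erase ht₀]
  · intro p hp
    obtain ⟨hG, ht⟩ := Finset.mem_sigma.1 hp
    obtain ⟨hFmem, hFsing, hheadmem⟩ := liftB_mem hG ht
    have hnp : nonePart (insert (insert none (p.2.image some))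
        ((p.1.erase p.2).image fun u => u.image some)) = insert none (p.2.image some) :=
      nonePart_eq hFmem hheadmem (Finset.mem_insert_self _ _)
    rw [hnp, eraseNone_insert_none_image]
    have h4 : (insert (insert none (p.2.image some)) ((p.1.erase p.2).image fun u =>
        u.image some)).image Finset.eraseNone = p.1 := by
      rw [Finset.image_insert, eraseNone_insert_none_image, Finset.image_image]
      have h5 : ∀ u ∈ p.1.erase p.2, (Function.comp Finset.eraseNone (fun u =>
          Finset.image some u)) u = u := by
        intro u hu
        simp [Function.comp_apply, Finset.eraseNone_image_some]
      rw [Finset.image_congr fun u hu => h5 u hu, Finset.image_id',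
        Finset.insert_erase ht]
    rw [h4]

lemma pSet_image_mem {β : Type*} [Fintype β] [DecidableEq β] (e : α ≃ β) {m : ℕ}
    {F : Finset (Finset α)} (hF : F ∈ pSet α m) :
    F.image (fun t => t.image e) ∈ pSet β m := by
  obtain ⟨hdisj, hsup, hne, hcard⟩ := mem_pSet.1 hF
  refine mem_pSet.2 ⟨?_, ?_, ?_, ?_⟩
  · rintro s' hs' t' ht' hne'
    obtain ⟨s, hs, rfl⟩ := Finset.mem_image.1 hs'
    obtain ⟨t, ht, rfl⟩ := Finset.mem_image.1 ht'
    have hst : s ≠ t := fun h => hne' (by rw [h])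
    refine Finset.disjoint_left.2 fun x hx hx' => ?_
    obtain ⟨a, ha, rfl⟩ := Finset.mem_image.1 hx
    have : a ∈ t := by
      obtain ⟨b, hb, hb'⟩ := Finset.mem_image.1 hx'
      rwa [e.injective hb'] at hb
    exact Finset.disjoint_left.1 (hdisj s hs t ht hst) ha this
  · ext b
    simp only [Finset.mem_sup, mem_univ, iff_true, id]
    have : e.symm b ∈ F.sup id := by rw [hsup]; exact mem_univ _
    obtain ⟨t, ht, hat⟩ := Finset.mem_sup.1 this
    refine ⟨t.image e, Finset.mem_image_of_mem _ ht, ?_⟩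
    have := Finset.mem_image_of_mem e hat
    rwa [e.apply_symm_apply] at this
  · intro h
    obtain ⟨t, ht, h0⟩ := Finset.mem_image.1 h
    exact hne ((Finset.image_eq_empty.1 h0) ▸ ht)
  · rw [Finset.card_image_of_injective _ (Finset.image_injective e.injective), hcard]

lemma card_pSet_congr {β : Type*} [Fintype β] [DecidableEq β] (e : α ≃ β) (m : ℕ) :
    (pSet α m).card = (pSet β m).card := by
  refine Finset.card_bij' (fun F _ => F.image (fun t => t.image e))
    (fun G _ => G.image (fun t => t.image e.symm))
    (fun F hF => pSet_image_mem e hF) (fun G hG => pSet_image_mem e.symm hG) ?_ ?_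
  · intro F hF
    rw [Finset.image_image]
    have : ∀ t ∈ F, ((fun t => Finset.image e.symm t) ∘ (fun t => Finset.image e t)) t = t := by
      intro t ht
      simp [Finset.image_image]
    rw [Finset.image_congr fun t ht => this t ht, Finset.image_id']
  · intro G hG
    rw [Finset.image_image]
    have : ∀ t ∈ G, ((fun t => Finset.image e t) ∘ (fun t => Finset.image e.symm t)) t = t := by
      intro t ht
      simp [Finset.image_image]
    rw [Finset.image_congr fun t ht => this t ht, Finset.image_id']

lemma card_pSet_option (m : ℕ) :
    (pSet (Option α) (m+1)).card = (pSet α m).card + (m+1) * (pSet α (m+1)).card := by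
  rw [← Finset.card_filter_add_card_filter_not (s := pSet (Option α) (m+1))
    (p := fun F => {none} ∈ F), cardA, cardB, Finset.card_sigma]
  congr 1
  rw [Finset.sum_congr rfl (fun G hG => (mem_pSet.1 hG).2.2.2), Finset.sum_const, smul_eq_mul,
    Nat.mul_comm]

/-- The equivalence between finpartitions with `m` parts and elements of `pSet`. -/
noncomputable def partEquiv (n m : ℕ) :
    {P : Finpartition (Finset.univ : Finset (Fin n)) // P.parts.card = m} ≃
      {F // F ∈ pSet (Fin n) m} where
  toFun P := ⟨P.1.parts, mem_pSet.2 ⟨fun s hs t ht hne => P.1.disjoint hs ht hne,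
      P.1.sup_parts, P.1.bot_notMem, P.2⟩⟩
  invFun F := ⟨⟨F.1,
      Finset.supIndep_iff_pairwiseDisjoint.mpr
        (fun s hs t ht hne => (mem_pSet.1 F.2).1 s hs t ht hne),
      (mem_pSet.1 F.2).2.1, (mem_pSet.1 F.2).2.2.1⟩, (mem_pSet.1 F.2).2.2.2⟩
  left_inv P := Subtype.ext (Finpartition.ext rfl)
  right_inv F := rfl

lemma stirling2_eq_card (n m : ℕ) : stirling2 n m = (pSet (Fin n) m).card := by
  rw [stirling2, Nat.card_congr (partEquiv n m), Nat.card_eq_finsetCard]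

lemma stirling2_zero_zero : stirling2 0 0 = 1 := by
  rw [stirling2_eq_card]
  have : pSet (Fin 0) 0 = {∅} := by
    ext F
    simp only [mem_pSet, mem_singleton]
    constructor
    · rintro ⟨-, -, -, h⟩; exact card_eq_zero.1 h
    · rintro rfl
      refine ⟨by simp, ?_, by simp, rfl⟩
      simp [Finset.univ_eq_empty]
  simp [this]

lemma stirling2_eq_zero {n m : ℕ} (h : n < m) : stirling2 n m = 0 := by
  rw [stirling2_eq_card, card_eq_zero]
  rw [eq_empty_iff_forall_notMem]
  intro F hF
  obtain ⟨hdisj, hsup, hne, hcard⟩ := mem_pSet.1 hF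
  have h1 : F.sup id = F.biUnion id := Finset.sup_eq_biUnion F id
  have h2 : (F.biUnion id).card = ∑ t ∈ F, t.card := by
    refine Finset.card_biUnion ?_
    intro s hs t ht hne'; exact hdisj s hs t ht hne'
  have h3 : ∀ t ∈ F, 1 ≤ t.card := by
    intro t ht
    rcases Finset.eq_empty_or_nonempty t with rfl | hne'
    · exact absurd ht hne
    · exact Nat.one_le_iff_ne_zero.2 (by simpa [Finset.card_eq_zero] using hne'.ne_empty)
  have : m ≤ n := by
    calc m = ∑ _t ∈ F, 1 := by simp [hcard]
    _ ≤ ∑ t ∈ F, t.card := Finset.sum_le_sum h3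
    _ = (F.biUnion id).card := h2.symm
    _ = n := by rw [← h1, hsup]; simp
  omega

lemma stirling2_succ_zero (n : ℕ) : stirling2 (n + 1) 0 = 0 := by
  rw [stirling2_eq_card, card_eq_zero, eq_empty_iff_forall_notMem]
  intro F hF
  obtain ⟨-, hsup, -, hcard⟩ := mem_pSet.1 hF
  rw [card_eq_zero] at hcard
  subst hcard
  simp only [Finset.sup_empty] at hsup
  have : (0 : Fin (n+1)) ∈ (⊥ : Finset (Fin (n+1))) := hsup ▸ mem_univ _
  simp at this

/-- coefficient -/
noncomputable def cc (k j : ℕ) (x : ℚ) : ℚ :=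
  ∑ i ∈ range (j+1), (-1:ℚ)^i * (x - i)^(k-1) / (i.factorial * (j-i).factorial)

lemma cc_zero (k : ℕ) (x : ℚ) : cc (k+1) 0 x = x ^ k := by
  simp [cc]

lemma cc_succ_zero (k : ℕ) (x : ℚ) : cc (k+2) 0 x = x * cc (k+1) 0 x := by
  rw [cc_zero, cc_zero, pow_succ, mul_comm]

lemma cc_succ (k j : ℕ) (hj : 1 ≤ j) (x : ℚ) :
    cc (k+2) j x = x * cc (k+1) j x + cc (k+1) (j-1) (x-1) := by
  obtain ⟨j', rfl⟩ : ∃ j', j = j' + 1 := ⟨j - 1, by omega⟩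
  simp only [cc, Nat.add_sub_cancel, Nat.succ_sub_one]
  rw [Finset.sum_range_succ' (fun i => (-1:ℚ)^i * (x - i)^(k+1) / (i.factorial *
    (j'+1-i).factorial)), Finset.sum_range_succ' (fun i => (-1:ℚ)^i * (x - i)^k /
    (i.factorial * (j'+1-i).factorial))]
  have key : ∀ i ∈ range (j'+1),
      (-1:ℚ)^(i+1) * (x - ↑(i+1))^(k+1) / (↑(i+1).factorial * ↑(j'+1-(i+1)).factorial)
      = x * ((-1:ℚ)^(i+1) * (x - ↑(i+1))^k / (↑(i+1).factorial * ↑(j'+1-(i+1)).factorial))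
        + (-1:ℚ)^i * (x - 1 - ↑i)^k / (↑i.factorial * ↑(j'-i).factorial) := by
    intro i hi
    have hij : i < j' + 1 := Finset.mem_range.1 hi
    have h1 : (j' + 1 - (i+1)) = j' - i := by omega
    have h2 : ((i+1).factorial : ℚ) = (i+1) * i.factorial := by
      rw [Nat.factorial_succ]; push_cast; ring
    have h3 : (x - (↑(i+1):ℚ)) = (x - 1 - i) := by push_cast; ring
    have h4 : (i.factorial : ℚ) ≠ 0 := Nat.cast_ne_zero.2 (Nat.factorial_ne_zero i)
    have h5 : ((j'-i).factorial : ℚ) ≠ 0 := Nat.cast_ne_zero.2 (Nat.factorial_ne_zero _)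
    have h6 : ((i:ℚ)+1) ≠ 0 := by positivity
    rw [h1, h2, h3]
    field_simp
    ring
  rw [Finset.sum_congr rfl key, Finset.sum_add_distrib, mul_add, Finset.mul_sum]
  simp only [pow_zero, Nat.cast_zero, sub_zero, Nat.factorial_zero, Nat.cast_one, one_mul,
    Nat.sub_zero]
  rw [pow_succ]
  ring

lemma cc_eq_zero (k : ℕ) : ∀ j, k + 1 ≤ j → ∀ x : ℚ, cc (k+1) j x = 0 := by
  induction k with
  | zero =>
    intro j hj x
    have hj0 : j ≠ 0 := by omega
    have key : ∀ i ∈ range (j+1), (-1:ℚ)^i * (x - i)^(1-1) / (i.factorial * (j-i).factorial)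
        = (-1:ℚ)^i * (j.choose i) / j.factorial := by
      intro i hi
      have hij : i ≤ j := Nat.lt_succ_iff.1 (Finset.mem_range.1 hi)
      have h := Nat.choose_mul_factorial_mul_factorial hij
      have hfac : ((j.choose i : ℚ)) * i.factorial * (j-i).factorial = j.factorial := by
        exact_mod_cast congrArg (Nat.cast : ℕ → ℚ) h
      have h4 : (i.factorial : ℚ) ≠ 0 := Nat.cast_ne_zero.2 (Nat.factorial_ne_zero i)
      have h5 : ((j-i).factorial : ℚ) ≠ 0 := Nat.cast_ne_zero.2 (Nat.factorial_ne_zero _)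
      have h6 : (j.factorial : ℚ) ≠ 0 := Nat.cast_ne_zero.2 (Nat.factorial_ne_zero _)
      rw [pow_zero]
      field_simp
      linear_combination (-1:ℚ) * hfac
    rw [cc, Finset.sum_congr rfl key, ← Finset.sum_div]
    have hZ := Int.alternating_sum_range_choose (n := j)
    have hQ : (∑ i ∈ range (j+1), (-1:ℚ)^i * (j.choose i))
        = ((if j = 0 then 1 else 0 : ℤ) : ℚ) := by
      rw [← hZ]
      push_cast
      rfl
    rw [hQ, if_neg hj0]
    simp
  | succ k ih =>
    intro j hj x
    rw [cc_succ _ _ (by omega), ih j (by omega), ih (j-1) (by omega)]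
    simp

lemma keyL (stirling2 : ℕ → ℕ → ℕ)
    (hrec : ∀ n m, stirling2 (n+1) (m+1) = (m+1) * stirling2 n (m+1) + stirling2 n m) :
    ∀ k, ∀ N M : ℕ, k + 1 ≤ M →
      (stirling2 (N+(k+1)) M : ℚ)
        = ∑ j ∈ range (k+1), (stirling2 (N+1) (M-j) : ℚ) * cc (k+1) j (M : ℚ) := by
  intro k
  induction k with
  | zero =>
    intro N M hM
    simp [cc_zero]
  | succ k ih =>
    intro N M hM
    obtain ⟨M', rfl⟩ : ∃ M', M = M' + 1 := ⟨M - 1, by omega⟩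
    have ih1 := ih N (M'+1) (by omega)
    have ih2 := ih N M' (by omega)
    have hcast : (M' : ℚ) = ((M'+1 : ℕ) : ℚ) - 1 := by push_cast; ring
    rw [hcast] at ih2
    have e0 : (stirling2 (N+(k+1+1)) (M'+1) : ℚ)
        = ((M'+1 : ℕ) : ℚ) * (stirling2 (N+(k+1)) (M'+1) : ℚ)
          + (stirling2 (N+(k+1)) M' : ℚ) := by
      have h2 : N+(k+1+1) = (N+(k+1))+1 := by ring
      rw [h2, hrec (N+(k+1)) M']
      push_cast
      ring
    rw [e0, ih1, ih2]
    have hsplit : ∀ j ∈ range (k+1+1),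
        (stirling2 (N+1) (M'+1-j) : ℚ) * cc (k+1+1) j ((M'+1:ℕ) : ℚ)
        = ((M'+1 : ℕ) : ℚ) * ((stirling2 (N+1) (M'+1-j) : ℚ) * cc (k+1) j ((M'+1:ℕ):ℚ))
          + (if j = 0 then 0 else (stirling2 (N+1) (M'+1-j) : ℚ) *
              cc (k+1) (j-1) (((M'+1:ℕ):ℚ) - 1)) := by
      intro j hj
      rcases Nat.eq_zero_or_pos j with rfl | hj0
      · rw [if_pos rfl, cc_succ_zero, add_zero]; ring
      · rw [if_neg (by omega), cc_succ _ _ (by omega)]; ring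
    have hs := Finset.sum_congr rfl hsplit
    rw [hs, Finset.sum_add_distrib, ← Finset.mul_sum,
      Finset.sum_range_succ (fun j => (stirling2 (N+1) (M'+1-j) : ℚ) * cc (k+1) j ((M'+1:ℕ):ℚ))
        (k+1),
      cc_eq_zero k (k+1) (by omega), mul_zero, add_zero,
      Finset.sum_range_succ' (fun j => if j = 0 then 0
        else (stirling2 (N+1) (M'+1-j) : ℚ) * cc (k+1) (j-1) (((M'+1:ℕ):ℚ) - 1)) (k+1)]
    simp only [eq_self_iff_true, if_true, add_zero, Nat.succ_ne_zero, if_false,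
      Nat.add_sub_cancel, Nat.add_sub_add_right]

theorem stirling2_succ_succ (n m : ℕ) :
    stirling2 (n+1) (m+1) = (m+1) * stirling2 n (m+1) + stirling2 n m := by
  rw [stirling2_eq_card, stirling2_eq_card, stirling2_eq_card,
    card_pSet_congr (finSuccEquiv n) (m+1), card_pSet_option]
  ring

lemma stirling2_one : ∀ n : ℕ, 1 ≤ n → stirling2 n 1 = 1 := by
  intro n
  induction n with
  | zero => omega
  | succ n ih =>
    intro _
    have h := stirling2_succ_succ n 0
    rcases Nat.eq_zero_or_pos n with rfl | hn
    · rw [h, stirling2_eq_zero (by omega), stirling2_zero_zero]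
    · obtain ⟨n', rfl⟩ : ∃ n', n = n' + 1 := ⟨n - 1, by omega⟩
      rw [h, ih (by omega), stirling2_succ_zero]

lemma dStir_pos_zero (m : ℕ) (hm : 1 ≤ m) : dStir m 0 = 0 := by
  rw [dStir]
  haveI : IsEmpty {σ : Equiv.Perm (Fin m) // (∀ i, σ i ≠ i) ∧
      Multiset.card σ.cycleType = 0} := by
    constructor
    rintro ⟨σ, h1, h2⟩
    have hσ : σ = 1 := Equiv.Perm.cycleType_eq_zero.1 (Multiset.card_eq_zero.1 h2)
    exact h1 ⟨0, hm⟩ (by simp [hσ])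
  exact Nat.card_of_isEmpty

lemma dStir_zero_zero : dStir 0 0 = 1 := by
  rw [dStir]
  haveI : Subsingleton (Equiv.Perm (Fin 0)) := ⟨fun a b => Equiv.ext fun x => x.elim0⟩
  haveI : Nonempty {σ : Equiv.Perm (Fin 0) // (∀ i, σ i ≠ i) ∧
      Multiset.card σ.cycleType = 0} := ⟨⟨1, fun i => i.elim0, by simp⟩⟩
  exact Nat.card_unique


noncomputable def W (ℓ k m : ℕ) : ℚ :=
  ∑ i ∈ range (k+ℓ-m+1), (-1:ℚ)^(i+(ℓ-k)+1) * ((k+ℓ-i : ℕ) : ℚ)^((k:ℤ)-1) /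
    (i.factorial * (k+ℓ-m-i).factorial)

lemma Etilde_eq {m ℓ : ℕ} (hm : ℓ ≤ m) :
    Etilde m ℓ = ∑ k ∈ range ℓ, if m ≤ ℓ + k then (dStir (k+ℓ-1) k : ℚ) * W ℓ k m else 0 := by
  rw [Etilde, ← Finset.sum_filter]
  refine Finset.sum_bij' (i := fun p _ => ℓ - p) (j := fun k _ => ℓ - k) ?_ ?_ ?_ ?_ ?_
  · intro p hp
    obtain ⟨h1, h2⟩ := Finset.mem_Icc.1 hp
    simp only [Finset.mem_filter, Finset.mem_range]
    omega
  · intro k hk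
    obtain ⟨hk1, hk2⟩ := Finset.mem_filter.1 hk
    rw [Finset.mem_range] at hk1
    rw [Finset.mem_Icc]
    omega
  · intro p hp
    obtain ⟨h1, h2⟩ := Finset.mem_Icc.1 hp
    omega
  · intro k hk
    obtain ⟨hk1, hk2⟩ := Finset.mem_filter.1 hk
    rw [Finset.mem_range] at hk1
    omega
  · intro p hp
    obtain ⟨h1, h2⟩ := Finset.mem_Icc.1 hp
    have e1 : (ℓ - p) + ℓ - 1 = 2 * ℓ - p - 1 := by omega
    have e2 : (ℓ - p) + ℓ - m = 2 * ℓ - m - p := by omega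
    rw [e1]
    congr 1
    rw [W, e2]
    refine Finset.sum_congr rfl fun i hi => ?_
    have hi' : i ≤ 2 * ℓ - m - p := Nat.lt_succ_iff.1 (Finset.mem_range.1 hi)
    have e3 : i + (ℓ - (ℓ - p)) + 1 = i + p + 1 := by omega
    have e4 : ((ℓ - p) + ℓ - i : ℕ) = (2 * ℓ - p - i : ℕ) := by omega
    have e5 : (((ℓ - p : ℕ) : ℤ)) - 1 = (ℓ : ℤ) - (p : ℤ) - 1 := by omega
    rw [e3, e4, e5]

lemma W_eq {ℓ K m : ℕ} (hK : 1 ≤ K) (hKl : K ≤ ℓ) :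
    W ℓ K m = (-1:ℚ)^(K+ℓ-1) * cc K (K+ℓ-m) ((K+ℓ : ℕ) : ℚ) := by
  rw [W, cc, Finset.mul_sum]
  refine Finset.sum_congr rfl fun i hi => ?_
  have hi' : i ≤ K+ℓ-m := Nat.lt_succ_iff.1 (Finset.mem_range.1 hi)
  have hiK : i ≤ K+ℓ := by omega
  have hsign : (-1:ℚ)^(i+(ℓ-K)+1) = (-1:ℚ)^(K+ℓ-1) * (-1:ℚ)^i := by
    have h2 : (i+(ℓ-K)+1) + 2*(K-1) = K+ℓ-1+i := by omega
    calc (-1:ℚ)^(i+(ℓ-K)+1) = (-1:ℚ)^(i+(ℓ-K)+1) * ((-1:ℚ)^2)^(K-1) := by norm_num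
    _ = (-1:ℚ)^((i+(ℓ-K)+1) + 2*(K-1)) := by rw [← pow_mul, ← pow_add]
    _ = (-1:ℚ)^(K+ℓ-1+i) := by rw [h2]
    _ = (-1:ℚ)^(K+ℓ-1) * (-1:ℚ)^i := by rw [pow_add]
  have hbase : ((K+ℓ-i : ℕ) : ℚ) = ((K+ℓ : ℕ) : ℚ) - i := by
    rw [Nat.cast_sub hiK]
  have hexp : ((K:ℤ)-1) = ((K-1 : ℕ) : ℤ) := by omega
  rw [hsign, hbase, hexp, zpow_natCast]
  ring

end Aux


theorem stmt16 (n ℓ : ℕ) (hn : 2 ≤ n) :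
    ∑ m ∈ Finset.Icc ℓ n, (stirling2 n m : ℚ) * Etilde m ℓ
      = ∑ k ∈ Finset.range ℓ,
          (-1 : ℚ) ^ (k + ℓ - 1) * dStir (k + ℓ - 1) k * stirling2 (n - 1 + k) (k + ℓ) := by
  rcases Nat.lt_or_ge n ℓ with hnl | hln
  · rw [Finset.Icc_eq_empty (by omega), Finset.sum_empty]
    symm
    refine Finset.sum_eq_zero fun k hk => ?_
    rw [stirling2_eq_zero (show n - 1 + k < k + ℓ by omega)]
    simp
  · have hE : ∀ m ∈ Finset.Icc ℓ n, (stirling2 n m : ℚ) * Etilde m ℓ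
        = ∑ k ∈ range ℓ, (if m ≤ ℓ + k then
            (stirling2 n m : ℚ) * ((dStir (k+ℓ-1) k : ℚ) * W ℓ k m) else 0) := by
      intro m hm
      obtain ⟨h1, h2⟩ := Finset.mem_Icc.1 hm
      rw [Etilde_eq h1, Finset.mul_sum]
      exact Finset.sum_congr rfl fun k hk => by rw [mul_ite, mul_zero]
    rw [Finset.sum_congr rfl hE, Finset.sum_comm]
    refine Finset.sum_congr rfl fun k hk => ?_
    have hkl : k < ℓ := Finset.mem_range.1 hk
    rcases Nat.eq_zero_or_pos k with rfl | hkpos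
    · rcases Nat.lt_or_ge ℓ 2 with hl2 | hl2
      · -- ℓ = 1, k = 0
        have hl1 : ℓ = 1 := by omega
        subst hl1
        rw [← Finset.sum_filter]
        have hfil : (Finset.Icc 1 n).filter (fun m => m ≤ 1 + 0) = {1} := by
          ext m
          simp only [Finset.mem_filter, Finset.mem_Icc, Finset.mem_singleton]
          omega
        rw [hfil, Finset.sum_singleton]
        have hW : W 1 0 1 = 1 := by
          norm_num [W]
        rw [hW]
        norm_num [dStir_zero_zero, stirling2_one n (by omega), stirling2_one (n-1) (by omega)]
      · -- ℓ ≥ 2, k = 0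
        have h0 : dStir (0+ℓ-1) 0 = 0 := dStir_pos_zero _ (by omega)
        rw [h0]
        simp
    · obtain ⟨k', rfl⟩ : ∃ k', k = k'+1 := ⟨k-1, by omega⟩
      have hkey := keyL stirling2 stirling2_succ_succ k' (n-1) (k'+1+ℓ) (by omega)
      rw [show n-1+1 = n from by omega] at hkey
      have hterm : ∀ m ∈ Finset.Icc ℓ n,
          (if m ≤ ℓ + (k'+1) then (stirling2 n m:ℚ) *
              ((dStir (k'+1+ℓ-1) (k'+1) : ℚ) * W ℓ (k'+1) m) else 0)
          = ((-1:ℚ)^(k'+1+ℓ-1) * (dStir (k'+1+ℓ-1) (k'+1) : ℚ)) *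
            (if m ≤ ℓ + (k'+1) then (stirling2 n m:ℚ) *
              cc (k'+1) (k'+1+ℓ-m) ((k'+1+ℓ : ℕ) : ℚ) else 0) := by
        intro m hm
        rw [W_eq (by omega) (by omega)]
        by_cases h : m ≤ ℓ + (k'+1)
        · rw [if_pos h, if_pos h]; ring
        · rw [if_neg h, if_neg h, mul_zero]
      rw [Finset.sum_congr rfl hterm, ← Finset.mul_sum]
      congr 1
      rw [← Finset.sum_filter]
      have hre : ∑ m ∈ (Finset.Icc ℓ n).filter (fun m => m ≤ ℓ + (k'+1)),
            (stirling2 n m : ℚ) * cc (k'+1) (k'+1+ℓ-m) ((k'+1+ℓ : ℕ) : ℚ)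
          = ∑ j ∈ (range (k'+1+1)).filter (fun j => k'+1+ℓ ≤ n + j),
            (stirling2 n (k'+1+ℓ-j) : ℚ) * cc (k'+1) j ((k'+1+ℓ : ℕ) : ℚ) := by
        refine Finset.sum_bij' (i := fun m _ => k'+1+ℓ-m) (j := fun j _ => k'+1+ℓ-j)
          ?_ ?_ ?_ ?_ ?_
        · intro m hm
          obtain ⟨hm1, hm2⟩ := Finset.mem_filter.1 hm
          obtain ⟨h1, h2⟩ := Finset.mem_Icc.1 hm1
          simp only [Finset.mem_filter, Finset.mem_range]
          omega
        · intro j hj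
          obtain ⟨hj1, hj2⟩ := Finset.mem_filter.1 hj
          rw [Finset.mem_range] at hj1
          simp only [Finset.mem_filter, Finset.mem_Icc]
          omega
        · intro m hm
          obtain ⟨hm1, hm2⟩ := Finset.mem_filter.1 hm
          obtain ⟨h1, h2⟩ := Finset.mem_Icc.1 hm1
          omega
        · intro j hj
          obtain ⟨hj1, hj2⟩ := Finset.mem_filter.1 hj
          rw [Finset.mem_range] at hj1
          omega
        · intro m hm
          obtain ⟨hm1, hm2⟩ := Finset.mem_filter.1 hm
          obtain ⟨h1, h2⟩ := Finset.mem_Icc.1 hm1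
          have e : k'+1+ℓ-(k'+1+ℓ-m) = m := by omega
          rw [e]
      rw [hre, Finset.sum_filter]
      have hext : ∀ j ∈ range (k'+1+1),
          (if k'+1+ℓ ≤ n + j then (stirling2 n (k'+1+ℓ-j) : ℚ) *
              cc (k'+1) j ((k'+1+ℓ : ℕ) : ℚ) else 0)
          = (stirling2 n (k'+1+ℓ-j) : ℚ) * cc (k'+1) j ((k'+1+ℓ : ℕ) : ℚ) := by
        intro j hj
        by_cases h : k'+1+ℓ ≤ n + j
        · rw [if_pos h]
        · rw [if_neg h, stirling2_eq_zero (show n < k'+1+ℓ-j by omega)]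
          simp
      rw [Finset.sum_congr rfl hext, Finset.sum_range_succ,
        cc_eq_zero k' (k'+1) le_rfl, mul_zero, add_zero]
      exact hkey.symm
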